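/- The FSIndex range search is consistent: with Z chosen componentwise to minimize F_i, traversing T_Z and pruning every subtree rooted at a node B with F(B) > ε loses no hits; i.e., every x ∈ Σ^m with f(x) ≤ ε lies in a bin π(x) whose corresponding node in T_Z has all ancestors B (including itself) satisfying F(B) ≤ ε. -/
import Mathlib


/-- Consistency of the FSIndex range search: the bin bound `F` is a lower bound for the
query function `f` (so `F (π x) ≤ f x`), and `F` is nondecreasing along each edge of the
implicit search tree `T_Z`; hence pruning every subtree rooted at a node `B` with
`F B > ε` loses no hits `x` with `f x ≤ ε`. -/
theorem FSIndex_range_search_consistent {A : Type*} [Fintype A] [Nonempty A] (m : ℕ)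
    {Γ : Fin m → Type*} [∀ i, Fintype (Γ i)]
    (π : ∀ i, A → Γ i) (hπ : ∀ i, Function.Surjective (π i))
    (f : Fin m → A → ℝ)
    (Z : ∀ i, Γ i)
    (hZ : ∀ (i) (γ : Γ i),
      sInf (f i '' {a : A | π i a = Z i}) ≤ sInf (f i '' {a : A | π i a = γ})) :
    (∀ x : Fin m → A,
        (∑ i, sInf (f i '' {a : A | π i a = π i (x i)})) ≤ ∑ i, f i (x i)) ∧
    (∀ (B : ∀ i, Γ i) (k : Fin m) (γ : Γ k), B k = Z k →
        (∑ i, sInf (f i '' {a : A | π i a = B i})) ≤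
          ∑ i, sInf (f i '' {a : A | π i a = Function.update B k γ i})) ∧
    (∀ (ε : ℝ) (x : Fin m → A), (∑ i, f i (x i)) ≤ ε →
        (∑ i, sInf (f i '' {a : A | π i a = π i (x i)})) ≤ ε) := by
  have h1 : ∀ x : Fin m → A,
      (∑ i, sInf (f i '' {a : A | π i a = π i (x i)})) ≤ ∑ i, f i (x i) := by
    intro x
    refine Finset.sum_le_sum fun i _ => ?_
    exact csInf_le (Set.Finite.bddBelow (Set.toFinite _)) ⟨x i, rfl, rfl⟩
  refine ⟨h1, ?_, fun ε x hx => le_trans (h1 x) hx⟩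
  intro B k γ hBk
  refine Finset.sum_le_sum fun i _ => ?_
  by_cases h : i = k
  · subst h
    rw [Function.update_self, hBk]
    exact hZ i γ
  · rw [Function.update_of_ne h]
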